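/- arXiv:1502.02613 — 2 statements merged into one kernel-verified Lean document; each statement's English description precedes it below -/
import Mathlib

section
/- Define π_i = β_i·θ_i² − β_{i+1}·θ_{i+1}·(θ_{i+1} − 1) for i ≥ 1. Then π_i ≥ 0 for every i ≥ 1, and for every k ≥ 2 one has Σ_{i=1}^{k−1} π_i·Δ_i ≤ (1/2)·(‖x_0 − x⋆‖² + E_k). -/
open RealInnerProductSpace Finset

/-!
One inexact proximal-gradient step from `w̄ᵢ` gives, for every `z`,
`2βᵢ (f xᵢ - f z) ≤ ‖w̄ᵢ - z‖² - ‖xᵢ - z‖² + εᵢ²`, and for `z ∈ C` the projection defining `w̄ᵢ`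
only shrinks `‖w̄ᵢ - z‖`. Taking `z = (1 - 1/θᵢ) x_{i-1} + x⋆/θᵢ` and multiplying by `θᵢ²` shows
that the potential `Φᵢ = 2β_{i+1}θ_{i+1}(θ_{i+1} - 1)Δᵢ + ‖θᵢxᵢ - (θᵢ - 1)x_{i-1} - x⋆‖²` drops by
at least `2πᵢΔᵢ - θᵢ²εᵢ²` at step `i`; the recursion for `θ` with `γ ≥ 2`, `b ≤ 1/4` is what makes
`πᵢ ≥ 0`. Telescoping from `Φ₀ = ‖x₀ - x⋆‖²` gives the bound.
-/

theorem ConvexOn.add_fderiv_sub_le {E : Type*} [NormedAddCommGroup E] [NormedSpace ℝ E]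
    {f : E → ℝ} {f' : E →L[ℝ] ℝ} {x : E} (hf : ConvexOn ℝ Set.univ f)
    (hx : HasFDerivAt f f' x) (y : E) : f x + f' (y - x) ≤ f y := by
  have hline : ConvexOn ℝ Set.univ (f ∘ AffineMap.lineMap x y) :=
    hf.comp_affineMap (AffineMap.lineMap x y)
  have hder : HasDerivAt (f ∘ AffineMap.lineMap x y) (f' (y - x)) (0 : ℝ) :=
    (by simpa using hx : HasFDerivAt f f' (AffineMap.lineMap x y (0 : ℝ))).comp_hasDerivAt
      (0 : ℝ) AffineMap.hasDerivAt_lineMap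
  have := hline.le_slope_of_hasDerivAt (Set.mem_univ 0) (Set.mem_univ 1) one_pos hder
  simp only [slope_def_field, Function.comp_apply, AffineMap.lineMap_apply_zero,
    AffineMap.lineMap_apply_one, sub_zero, div_one] at this
  linarith

theorem Convex.norm_sub_le_of_forall_norm_sub_le {E : Type*} [NormedAddCommGroup E]
    [InnerProductSpace ℝ E] {C : Set E} (hC : Convex ℝ C) {y p z : E} (hp : p ∈ C)
    (hnear : ∀ w ∈ C, ‖y - p‖ ≤ ‖y - w‖) (hz : z ∈ C) : ‖p - z‖ ≤ ‖y - z‖ := by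
  have : Nonempty C := ⟨⟨p, hp⟩⟩
  have hinf : ‖y - p‖ = ⨅ w : C, ‖y - w‖ :=
    le_antisymm (le_ciInf fun w => hnear w w.2)
      (ciInf_le ⟨0, by rintro _ ⟨w, rfl⟩; positivity⟩ (⟨p, hp⟩ : C))
  have hobtuse : ⟪y - p, z - p⟫ ≤ 0 := (norm_eq_iInf_iff_real_inner_le_zero hC hp).mp hinf z hz
  have hexpand : ‖y - z‖ ^ 2 = ‖y - p‖ ^ 2 - 2 * ⟪y - p, z - p⟫ + ‖p - z‖ ^ 2 := by
    rw [show y - z = (y - p) - (z - p) by abel, norm_sub_sq_real, norm_sub_rev z p]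
  refine (pow_le_pow_iff_left₀ (norm_nonneg _) (norm_nonneg _) two_ne_zero).mp ?_
  nlinarith [sq_nonneg ‖y - p‖]

theorem inexact_prox_grad_step_le {E : Type*} [NormedAddCommGroup E] [InnerProductSpace ℝ E]
    [CompleteSpace E] {L R : E → ℝ} {g w x : E} {β ε : ℝ} (hL : ConvexOn ℝ Set.univ L)
    (hg : HasGradientAt L g w) (hβ : 0 < β)
    (hprox : ∀ z, R z ≥ R x + ⟪z - x, β⁻¹ • (w - β • g - x)⟫ - ε ^ 2 / (2 * β))
    (hmaj : L x ≤ L w + ⟪x - w, g⟫ + ‖x - w‖ ^ 2 / (2 * β)) (z : E) :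
    2 * β * (L x + R x - (L z + R z)) ≤ ‖w - z‖ ^ 2 - ‖x - z‖ ^ 2 + ε ^ 2 := by
  have hgrad : L w + ⟪z - w, g⟫ ≤ L z := by
    simpa only [InnerProductSpace.toDual_apply_apply, real_inner_comm] using
      hL.add_fderiv_sub_le (hasGradientAt_iff_hasFDerivAt.mp hg) z
  have hinner : ⟪z - x, β⁻¹ • (w - β • g - x)⟫ = β⁻¹ * ⟪z - x, w - x⟫ - ⟪z - x, g⟫ := by
    rw [real_inner_smul_right, show w - β • g - x = (w - x) - β • g by abel, inner_sub_right,
      real_inner_smul_right]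
    field_simp
  have hlin : ⟪x - w, g⟫ - ⟪z - w, g⟫ = -⟪z - x, g⟫ := by
    rw [← inner_sub_left, ← inner_neg_left]; congr 1; abel
  have hnorm : ‖w - z‖ ^ 2 - ‖x - z‖ ^ 2 = ‖x - w‖ ^ 2 - 2 * ⟪z - x, w - x⟫ := by
    rw [show w - z = (w - x) - (z - x) by abel, norm_sub_sq_real, norm_sub_rev w x,
      norm_sub_rev z x, real_inner_comm]
    ring
  have hsplit : (‖x - w‖ ^ 2 - 2 * ⟪z - x, w - x⟫ + ε ^ 2) / (2 * β)
      = ‖x - w‖ ^ 2 / (2 * β) - β⁻¹ * ⟪z - x, w - x⟫ + ε ^ 2 / (2 * β) := by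
    field_simp
  have key : L x + R x - (L z + R z) ≤ (‖x - w‖ ^ 2 - 2 * ⟪z - x, w - x⟫ + ε ^ 2) / (2 * β) := by
    linarith [hprox z]
  rwa [hnorm, ← le_div_iff₀' (by positivity)]

theorem ConvexOn.momentum_step_le {E : Type*} [NormedAddCommGroup E] [NormedSpace ℝ E]
    {C : Set E} {f : E → ℝ} (hf : ConvexOn ℝ C f) {x x' y xstar : E} (hx' : x' ∈ C)
    (hxstar : xstar ∈ C) {β θ ε : ℝ} (hβ : 0 ≤ β) (hθ : 1 ≤ θ)
    (hstep : ∀ z ∈ C, 2 * β * (f x - f z) ≤ ‖y - z‖ ^ 2 - ‖x - z‖ ^ 2 + ε ^ 2) :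
    2 * β * θ ^ 2 * (f x - f xstar) + ‖θ • x - (θ - 1) • x' - xstar‖ ^ 2 ≤
      2 * β * θ * (θ - 1) * (f x' - f xstar) + ‖θ • y - (θ - 1) • x' - xstar‖ ^ 2
        + θ ^ 2 * ε ^ 2 := by
  have hθ0 : 0 < θ := by linarith
  set z := (1 - θ⁻¹) • x' + θ⁻¹ • xstar with hz
  have ht0 : 0 ≤ θ⁻¹ := inv_nonneg.mpr hθ0.le
  have ht1 : 0 ≤ 1 - θ⁻¹ := sub_nonneg.mpr (inv_le_one_of_one_le₀ hθ)
  have hzC : z ∈ C := hf.1 hx' hxstar ht1 ht0 (by ring)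
  have hfz : f z ≤ (1 - θ⁻¹) * f x' + θ⁻¹ * f xstar := hf.2 hx' hxstar ht1 ht0 (by ring)
  have hsq (u : E) : ‖θ • u - (θ - 1) • x' - xstar‖ ^ 2 = θ ^ 2 * ‖u - z‖ ^ 2 := by
    have : θ • u - (θ - 1) • x' - xstar = θ • (u - z) := by
      rw [hz, smul_sub, smul_add, smul_smul, smul_smul, mul_sub, mul_inv_cancel₀ hθ0.ne',
        mul_one, one_smul]
      abel
    rw [this, norm_smul, Real.norm_of_nonneg hθ0.le, mul_pow]
  have hconv : 2 * β * θ ^ 2 * (f x - f xstar) - 2 * β * θ * (θ - 1) * (f x' - f xstar)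
      ≤ θ ^ 2 * (2 * β * (f x - f z)) := by
    have h := mul_le_mul_of_nonneg_left hfz (by positivity : 0 ≤ 2 * β * θ ^ 2)
    have e : 2 * β * θ ^ 2 * ((1 - θ⁻¹) * f x' + θ⁻¹ * f xstar)
        = 2 * β * θ * (θ - 1) * f x' + 2 * β * θ * f xstar := by
      field_simp
    linarith
  rw [hsq, hsq]
  linarith [mul_le_mul_of_nonneg_left (hstep z hzC) (sq_nonneg θ)]

theorem pnpg_step_le {E : Type*} [NormedAddCommGroup E] [InnerProductSpace ℝ E]
    [CompleteSpace E] {L R : E → ℝ} (hL : ConvexOn ℝ Set.univ L) (hR : ConvexOn ℝ Set.univ R)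
    {C : Set E} (hC : Convex ℝ C) {P : E → E} (hPmem : ∀ z, P z ∈ C)
    (hPproj : ∀ z, ∀ y ∈ C, ‖z - P z‖ ≤ ‖z - y‖) {x'' x' x w g xstar : E} (hx' : x' ∈ C)
    (hxstar : xstar ∈ C) {β ε θ' θ : ℝ} (hβ : 0 < β) (hθ : 1 ≤ θ) (hg : HasGradientAt L g w)
    (hw : w = P (x' + ((θ' - 1) / θ) • (x' - x'')))
    (hprox : ∀ z, R z ≥ R x + ⟪z - x, β⁻¹ • (w - β • g - x)⟫ - ε ^ 2 / (2 * β))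
    (hmaj : L x ≤ L w + ⟪x - w, g⟫ + ‖x - w‖ ^ 2 / (2 * β)) :
    2 * β * θ ^ 2 * ((L + R) x - (L + R) xstar) + ‖θ • x - (θ - 1) • x' - xstar‖ ^ 2 ≤
      2 * β * θ * (θ - 1) * ((L + R) x' - (L + R) xstar)
        + ‖θ' • x' - (θ' - 1) • x'' - xstar‖ ^ 2 + θ ^ 2 * ε ^ 2 := by
  set y := x' + ((θ' - 1) / θ) • (x' - x'')
  have hθ0 : θ ≠ 0 := by linarith
  have hy : θ • y - (θ - 1) • x' - xstar = θ' • x' - (θ' - 1) • x'' - xstar := by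
    simp only [y]
    match_scalars <;> field_simp; ring
  rw [← hy]
  refine (hL.add hR).subset (Set.subset_univ C) hC |>.momentum_step_le hx' hxstar hβ.le hθ
    fun z hz => ?_
  have hproj : ‖w - z‖ ≤ ‖y - z‖ := by
    rw [hw]
    exact hC.norm_sub_le_of_forall_norm_sub_le (hPmem _) (hPproj _) hz
  have := inexact_prox_grad_step_le hL hg hβ hprox hmaj z
  rw [Pi.add_apply, Pi.add_apply]
  linarith [pow_le_pow_left₀ (norm_nonneg _) hproj 2]

theorem momentum_gap_nonneg {γ b β β' θ θ' : ℝ} (hγ : 2 ≤ γ) (hb0 : 0 ≤ b) (hb1 : b ≤ 1 / 4)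
    (hβ : 0 ≤ β) (hβ' : 0 < β') (hθ' : θ' = 1 / γ + √(b + β / β' * θ ^ 2)) (hθ'1 : 1 ≤ θ') :
    0 ≤ β * θ ^ 2 - β' * θ' * (θ' - 1) := by
  have hsq : (θ' - 1 / γ) ^ 2 = b + β / β' * θ ^ 2 := by
    rw [hθ', add_sub_cancel_left, Real.sq_sqrt (by positivity)]
  have hβθ : β * θ ^ 2 = β' * ((θ' - 1 / γ) ^ 2 - b) := by
    rw [hsq]; field_simp; ring
  have hγinv : 1 / γ ≤ 1 / 2 := one_div_le_one_div_of_le two_pos hγ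
  have hgap : 0 ≤ (θ' - 1) * (1 - 2 / γ) + ((1 - 1 / γ) ^ 2 - b) := by
    have h2γ : 0 ≤ 1 - 2 / γ := by linarith [show 2 / γ = 2 * (1 / γ) by ring]
    have : 1 / 4 ≤ (1 - 1 / γ) ^ 2 := by nlinarith
    linarith [mul_nonneg (sub_nonneg.mpr hθ'1) h2γ]
  rw [hβθ, show β' * ((θ' - 1 / γ) ^ 2 - b) - β' * θ' * (θ' - 1)
    = β' * ((θ' - 1) * (1 - 2 / γ) + ((1 - 1 / γ) ^ 2 - b)) by ring]
  exact mul_nonneg hβ'.le hgap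

theorem add_sum_Icc_le_of_forall_add_le {Φ g e : ℤ → ℝ}
    (h : ∀ i, 1 ≤ i → Φ i + g i ≤ Φ (i - 1) + e i) :
    ∀ k, 0 ≤ k → Φ k + ∑ i ∈ Icc 1 k, g i ≤ Φ 0 + ∑ i ∈ Icc 1 k, e i := by
  refine Int.leInduction le_rfl fun k hk ih => ?_
  rw [← insert_Icc_right_eq_Icc_add_one (by omega), sum_insert (by simp),
    sum_insert (by simp)]
  have hstep := h (k + 1) (by omega)
  rw [add_sub_cancel_right] at hstep
  linarith

theorem pnpg_momentum_gap_sum_general {E : Type*} [NormedAddCommGroup E]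
    [InnerProductSpace ℝ E] [FiniteDimensional ℝ E]
    (L R f : E → ℝ) (gradL : E → E)
    (hLconv : ConvexOn ℝ Set.univ L)
    (hLgrad : ∀ x, HasGradientAt L (gradL x) x)
    (hRconv : ConvexOn ℝ Set.univ R)
    (hf : ∀ x, f x = L x + R x)
    (C : Set E) (hCconv : Convex ℝ C)
    (P : E → E) (hPmem : ∀ z, P z ∈ C)
    (hPproj : ∀ z, ∀ y ∈ C, ‖z - P z‖ ≤ ‖z - y‖)
    (γ b : ℝ) (hγ : 2 ≤ γ) (hb0 : 0 ≤ b) (hb1 : b ≤ 1 / 4)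
    (β εs θ : ℤ → ℝ)
    (hβpos : ∀ i, 1 ≤ i → 0 < β i)
    (hθ0 : θ 0 = 1) (hθ1 : θ 1 = 1)
    (hθ : ∀ i, 2 ≤ i → θ i = 1 / γ + Real.sqrt (b + (β (i - 1) / β i) * (θ (i - 1)) ^ 2))
    (hθge1 : ∀ i, 1 ≤ i → 1 ≤ θ i)
    (x w : ℤ → E)
    (hw : ∀ i, 1 ≤ i →
      w i = P (x (i - 1) + ((θ (i - 1) - 1) / θ i) • (x (i - 1) - x (i - 2))))
    (hprox : ∀ i, 1 ≤ i → ∀ z, R z ≥ R (x i) +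
      ⟪z - x i, (β i)⁻¹ • (w i - β i • gradL (w i) - x i)⟫ - (εs i) ^ 2 / (2 * β i))
    (hmaj : ∀ i, 1 ≤ i → L (x i) ≤ L (w i) + ⟪x i - w i, gradL (w i)⟫
      + ‖x i - w i‖ ^ 2 / (2 * β i))
    (hxC : ∀ i, 0 ≤ i → x i ∈ C)
    (xstar : E) (hxstarC : xstar ∈ C) (hmin : ∀ z, f xstar ≤ f z)
    (π : ℤ → ℝ)
    (hπ : ∀ i : ℤ, π i = β i * (θ i) ^ 2 - β (i + 1) * θ (i + 1) * (θ (i + 1) - 1)) :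
    (∀ i : ℤ, 1 ≤ i → 0 ≤ π i) ∧
      ∀ k : ℤ, 2 ≤ k →
        ∑ i ∈ Finset.Icc 1 (k - 1), π i * (f (x i) - f xstar) ≤
          (1 / 2) * (‖x 0 - xstar‖ ^ 2 + ∑ i ∈ Finset.Icc 1 k, (θ i) ^ 2 * (εs i) ^ 2) := by
  obtain rfl : f = L + R := funext hf
  set Δ : ℤ → ℝ := fun i => (L + R) (x i) - (L + R) xstar
  set v : ℤ → E := fun i => θ i • x i - (θ i - 1) • x (i - 1) - xstar
  have hπ_nonneg (i : ℤ) (hi : 1 ≤ i) : 0 ≤ π i := by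
    have hrec := hθ (i + 1) (by omega)
    rw [add_sub_cancel_right] at hrec
    rw [hπ]
    exact momentum_gap_nonneg hγ hb0 hb1 (hβpos i hi).le (hβpos _ (by omega)) hrec
      (hθge1 _ (by omega))
  have hstep (i : ℤ) (hi : 1 ≤ i) : 2 * β i * θ i ^ 2 * Δ i + ‖v i‖ ^ 2 ≤
      2 * β i * θ i * (θ i - 1) * Δ (i - 1) + ‖v (i - 1)‖ ^ 2 + θ i ^ 2 * εs i ^ 2 :=
    pnpg_step_le hLconv hRconv hCconv hPmem hPproj (hxC _ (by omega)) hxstarC (hβpos i hi)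
      (hθge1 i hi) (hLgrad _) (by rw [hw i hi, show i - 1 - 1 = i - 2 by ring]) (hprox i hi)
      (hmaj i hi)
  refine ⟨hπ_nonneg, fun k hk => ?_⟩
  have htel := add_sum_Icc_le_of_forall_add_le
    (Φ := fun i => 2 * β (i + 1) * θ (i + 1) * (θ (i + 1) - 1) * Δ i + ‖v i‖ ^ 2)
    (g := fun i => 2 * (π i * Δ i)) (e := fun i => θ i ^ 2 * εs i ^ 2)
    (fun i hi => by simp only [sub_add_cancel, hπ]; linarith [hstep i hi]) k (by omega)
  have hΦ0 : 2 * β 1 * θ 1 * (θ 1 - 1) * Δ 0 + ‖v 0‖ ^ 2 = ‖x 0 - xstar‖ ^ 2 := by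
    simp [v, hθ0, hθ1]
  have hΦk : 0 ≤ 2 * β (k + 1) * θ (k + 1) * (θ (k + 1) - 1) * Δ k + ‖v k‖ ^ 2 := by
    have := hβpos (k + 1) (by omega)
    have := hθge1 (k + 1) (by omega)
    have : 0 ≤ Δ k := sub_nonneg.mpr (hmin _)
    positivity
  have hmono : ∑ i ∈ Icc 1 (k - 1), π i * Δ i ≤ ∑ i ∈ Icc 1 k, π i * Δ i :=
    sum_le_sum_of_subset_of_nonneg (Icc_subset_Icc le_rfl (by omega)) fun i hi _ =>
      mul_nonneg (hπ_nonneg i (mem_Icc.mp hi).1) (sub_nonneg.mpr (hmin _))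
  rw [← mul_sum, zero_add, hΦ0] at htel
  show ∑ i ∈ Icc 1 (k - 1), π i * Δ i ≤ _
  linarith

/-- With `π_i = β_i θ_i² − β_{i+1} θ_{i+1} (θ_{i+1} − 1)`, one has
`π_i ≥ 0` for every `i ≥ 1` and, for every `k ≥ 2`,
`Σ_{i=1}^{k−1} π_i Δ_i ≤ (1/2)(‖x_0 − x⋆‖² + E_k)`. -/
theorem pnpg_momentum_gap_sum {E : Type*} [NormedAddCommGroup E]
    [InnerProductSpace ℝ E] [FiniteDimensional ℝ E]
    (L R f : E → ℝ) (gradL : E → E)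
    (hLconv : ConvexOn ℝ Set.univ L)
    (hLgrad : ∀ x, HasGradientAt L (gradL x) x)
    (hRconv : ConvexOn ℝ Set.univ R)
    (hf : ∀ x, f x = L x + R x)
    (C : Set E) (hCne : C.Nonempty) (hCcl : IsClosed C) (hCconv : Convex ℝ C)
    (P : E → E) (hPmem : ∀ z, P z ∈ C)
    (hPproj : ∀ z, ∀ y ∈ C, ‖z - P z‖ ≤ ‖z - y‖)
    (γ b : ℝ) (hγ : 2 ≤ γ) (hb0 : 0 ≤ b) (hb1 : b ≤ 1 / 4)
    (β εs θ : ℤ → ℝ)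
    (hβpos : ∀ i, 1 ≤ i → 0 < β i) (hεs : ∀ i, 1 ≤ i → 0 ≤ εs i)
    (hθ0 : θ 0 = 1) (hθ1 : θ 1 = 1)
    (hθ : ∀ i, 2 ≤ i → θ i = 1 / γ + Real.sqrt (b + (β (i - 1) / β i) * (θ (i - 1)) ^ 2))
    (hθge1 : ∀ i, 1 ≤ i → 1 ≤ θ i)
    (x w : ℤ → E)
    (hw : ∀ i, 1 ≤ i →
      w i = P (x (i - 1) + ((θ (i - 1) - 1) / θ i) • (x (i - 1) - x (i - 2))))
    (hprox : ∀ i, 1 ≤ i → ∀ z, R z ≥ R (x i) +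
      ⟪z - x i, (β i)⁻¹ • (w i - β i • gradL (w i) - x i)⟫ - (εs i) ^ 2 / (2 * β i))
    (hmaj : ∀ i, 1 ≤ i → L (x i) ≤ L (w i) + ⟪x i - w i, gradL (w i)⟫
      + ‖x i - w i‖ ^ 2 / (2 * β i))
    (hxC : ∀ i, 0 ≤ i → x i ∈ C)
    (xstar : E) (hxstarC : xstar ∈ C) (hmin : ∀ z, f xstar ≤ f z)
    (π : ℤ → ℝ)
    (hπ : ∀ i : ℤ, π i = β i * (θ i) ^ 2 - β (i + 1) * θ (i + 1) * (θ (i + 1) - 1)) :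
    (∀ i : ℤ, 1 ≤ i → 0 ≤ π i) ∧
      ∀ k : ℤ, 2 ≤ k →
        ∑ i ∈ Finset.Icc 1 (k - 1), π i * (f (x i) - f xstar) ≤
          (1 / 2) * (‖x 0 - xstar‖ ^ 2 + ∑ i ∈ Finset.Icc 1 k, (θ i) ^ 2 * (εs i) ^ 2) :=
  pnpg_momentum_gap_sum_general L R f gradL hLconv hLgrad hRconv hf C hCconv P hPmem hPproj γ b hγ
    hb0 hb1 β εs θ hβpos hθ0 hθ1 hθ hθge1 x w hw hprox hmaj hxC xstar hxstarC hmin π hπ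
end

section
/- Let Θ ≥ 0, let y, z ∈ E, and set w̄ = P_C(y + Θ·(y − z)). Suppose x⁺ ∈ E is an ε-inexact proximal-gradient step from w̄ with step size β > 0 satisfying the majorization condition at (x⁺, w̄), and suppose x⋆ ∈ C is a global minimizer of f. Then ‖x⁺ − x⋆‖² − ‖y − x⋆‖² ≤ Θ·[(‖y − x⋆‖² − ‖z − x⋆‖²) + (Θ + 1)·‖y − z‖²] + ε². -/
/-!
The inexact prox inequality, the gradient inequality for the convex `L` at `w̄` and the
majorization condition combine into the basic descent estimate
`2β (f x⁺ - f u) ≤ ‖w̄ - u‖² - ‖x⁺ - u‖² + ε²` for every `u`; at the minimizer `u = x⋆` the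
left side is nonnegative. Since `x⋆ ∈ C`, the projection defining `w̄` does not increase the
distance to `x⋆`, and `‖y + Θ (y - z) - x⋆‖²` expands exactly into the right-hand side.
-/

open RealInnerProductSpace Set AffineMap

section

variable {E : Type*} [NormedAddCommGroup E] [InnerProductSpace ℝ E]

theorem ConvexOn.add_inner_sub_le_of_hasGradientAt [CompleteSpace E] {L : E → ℝ} {g x v : E}
    (hL : ConvexOn ℝ univ L) (hg : HasGradientAt L g x) : L x + ⟪v - x, g⟫ ≤ L v := by
  have hline : HasDerivAt (L ∘ lineMap x v) ⟪v - x, g⟫ (0 : ℝ) := by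
    have := HasFDerivAt.comp_hasDerivAt (0 : ℝ) (by rw [lineMap_apply_zero]; exact hg.hasFDerivAt)
      (hasDerivAt_lineMap (a := x) (b := v) (x := (0 : ℝ)))
    simpa [real_inner_comm] using this
  have := (hL.comp_affineMap (lineMap x v)).le_slope_of_hasDerivAt
    (mem_univ 0) (mem_univ 1) one_pos hline
  simp only [slope, Function.comp_apply, lineMap_apply_zero, lineMap_apply_one, sub_zero,
    inv_one, vsub_eq_sub, one_smul] at this
  linarith

theorem Convex.real_inner_le_zero_of_isMinOn_norm_sub {C : Set E} (hC : Convex ℝ C)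
    {v p c : E} (hp : p ∈ C) (hmin : IsMinOn (fun c => ‖v - c‖) C p) (hc : c ∈ C) :
    ⟪v - p, c - p⟫ ≤ 0 := by
  have : Nonempty C := ⟨⟨p, hp⟩⟩
  have hbdd : BddBelow (range fun c : C => ‖v - c‖) :=
    ⟨0, forall_mem_range.2 fun _ => norm_nonneg _⟩
  refine (norm_eq_iInf_iff_real_inner_le_zero hC hp).mp ?_ c hc
  exact le_antisymm (le_ciInf fun c => hmin c.2) (ciInf_le hbdd ⟨p, hp⟩)

theorem Convex.norm_sub_le_of_isMinOn_norm_sub {C : Set E} (hC : Convex ℝ C)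
    {v p c : E} (hp : p ∈ C) (hmin : IsMinOn (fun c => ‖v - c‖) C p) (hc : c ∈ C) :
    ‖p - c‖ ≤ ‖v - c‖ := by
  have hobtuse := hC.real_inner_le_zero_of_isMinOn_norm_sub hp hmin hc
  have hexpand : ‖v - c‖ ^ 2 = ‖v - p‖ ^ 2 - 2 * ⟪v - p, c - p⟫ + ‖p - c‖ ^ 2 := by
    rw [show v - c = (v - p) - (c - p) by abel, norm_sub_sq_real, norm_sub_rev c p]
  exact (pow_le_pow_iff_left₀ (norm_nonneg _) (norm_nonneg _) two_ne_zero).mp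
    (by nlinarith [sq_nonneg ‖v - p‖])

theorem two_mul_sub_le_of_inexact_proxGrad_step [CompleteSpace E] {L R : E → ℝ} {g w x : E}
    {β ε : ℝ} (hL : ConvexOn ℝ univ L) (hg : HasGradientAt L g w) (hβ : 0 < β)
    (hprox : ∀ v, R v ≥ R x + ⟪v - x, β⁻¹ • (w - β • g - x)⟫ - ε ^ 2 / (2 * β))
    (hmaj : L x ≤ L w + ⟪x - w, g⟫ + ‖x - w‖ ^ 2 / (2 * β)) (u : E) :
    2 * β * ((L x + R x) - (L u + R u)) ≤ ‖w - u‖ ^ 2 - ‖x - u‖ ^ 2 + ε ^ 2 := by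
  have hgrad : L w + ⟪u - w, g⟫ ≤ L u := hL.add_inner_sub_le_of_hasGradientAt hg
  have hproxu := hprox u
  have hinner : ⟪u - x, β⁻¹ • (w - β • g - x)⟫ = β⁻¹ * ⟪u - x, w - x⟫ - ⟪u - x, g⟫ := by
    rw [real_inner_smul_right, show w - β • g - x = (w - x) - β • g by abel, inner_sub_right,
      real_inner_smul_right]
    field_simp
  have hsplit : ⟪u - w, g⟫ = ⟪u - x, g⟫ + ⟪x - w, g⟫ := by
    rw [← inner_add_left, sub_add_sub_cancel]
  have hexpand : ‖w - u‖ ^ 2 = ‖x - w‖ ^ 2 - 2 * ⟪u - x, w - x⟫ + ‖x - u‖ ^ 2 := by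
    rw [show w - u = (w - x) - (u - x) by abel, norm_sub_sq_real, norm_sub_rev w x,
      norm_sub_rev u x, real_inner_comm]
  have hsum : (L x + R x) - (L u + R u)
      ≤ ‖x - w‖ ^ 2 / (2 * β) - β⁻¹ * ⟪u - x, w - x⟫ + ε ^ 2 / (2 * β) := by
    linarith
  calc 2 * β * ((L x + R x) - (L u + R u))
      ≤ 2 * β * (‖x - w‖ ^ 2 / (2 * β) - β⁻¹ * ⟪u - x, w - x⟫ + ε ^ 2 / (2 * β)) := by gcongr
    _ = ‖w - u‖ ^ 2 - ‖x - u‖ ^ 2 + ε ^ 2 := by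
      rw [hexpand]
      field_simp
      ring

theorem norm_add_smul_sub_sub_sq (x y z : E) (Θ : ℝ) :
    ‖y + Θ • (y - z) - x‖ ^ 2 =
      ‖y - x‖ ^ 2 + Θ * ((‖y - x‖ ^ 2 - ‖z - x‖ ^ 2) + (Θ + 1) * ‖y - z‖ ^ 2) := by
  rw [show y + Θ • (y - z) - x = (y - x) + Θ • ((y - x) - (z - x)) by module,
    show y - z = (y - x) - (z - x) by abel]
  generalize y - x = a
  generalize z - x = c
  simp only [norm_add_sq_real, norm_sub_sq_real, norm_smul, mul_pow, Real.norm_eq_abs, sq_abs,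
    real_inner_smul_right, inner_sub_right, real_inner_self_eq_norm_sq]
  ring

end

theorem pnpg_iterate_distance_recursion_general {E : Type*} [NormedAddCommGroup E]
    [InnerProductSpace ℝ E] [FiniteDimensional ℝ E]
    (L R f : E → ℝ) (gradL : E → E)
    (hLconv : ConvexOn ℝ Set.univ L)
    (hLgrad : ∀ x, HasGradientAt L (gradL x) x)
    (hf : ∀ x, f x = L x + R x)
    (C : Set E) (hCconv : Convex ℝ C)
    (P : E → E) (hPmem : ∀ v, P v ∈ C)
    (hPproj : ∀ v, ∀ c ∈ C, ‖v - P v‖ ≤ ‖v - c‖)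
    (Θ : ℝ) (y z : E)
    (wbar : E) (hwbar : wbar = P (y + Θ • (y - z)))
    (xplus : E) (β ε : ℝ) (hβ : 0 < β)
    (hprox : ∀ v, R v ≥ R xplus +
      ⟪v - xplus, β⁻¹ • (wbar - β • gradL wbar - xplus)⟫ - ε ^ 2 / (2 * β))
    (hmaj : L xplus ≤ L wbar + ⟪xplus - wbar, gradL wbar⟫ + ‖xplus - wbar‖ ^ 2 / (2 * β))
    (xstar : E) (hxstarC : xstar ∈ C) (hmin : ∀ v, f xstar ≤ f v) :
    ‖xplus - xstar‖ ^ 2 - ‖y - xstar‖ ^ 2 ≤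
      Θ * ((‖y - xstar‖ ^ 2 - ‖z - xstar‖ ^ 2) + (Θ + 1) * ‖y - z‖ ^ 2) + ε ^ 2 := by
  have hdescent := two_mul_sub_le_of_inexact_proxGrad_step hLconv (hLgrad wbar) hβ hprox hmaj xstar
  have hgap : 0 ≤ 2 * β * ((L xplus + R xplus) - (L xstar + R xstar)) := by
    have := hmin xplus
    rw [hf, hf] at this
    exact mul_nonneg (by positivity) (sub_nonneg.mpr this)
  have hproj : ‖wbar - xstar‖ ≤ ‖y + Θ • (y - z) - xstar‖ :=
    hwbar ▸ hCconv.norm_sub_le_of_isMinOn_norm_sub (hPmem _) (fun c hc => hPproj _ c hc) hxstarC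
  have hproj_sq := pow_le_pow_left₀ (norm_nonneg _) hproj 2
  rw [norm_add_smul_sub_sub_sq] at hproj_sq
  linarith

/-- If `Θ ≥ 0`, `w̄ = P_C(y + Θ(y − z))`, `x⁺` is an `ε`-inexact
proximal-gradient step from `w̄` with step size `β > 0` satisfying the majorization
condition at `(x⁺, w̄)`, and `x⋆ ∈ C` is a global minimizer of `f`, then
`‖x⁺ − x⋆‖² − ‖y − x⋆‖² ≤ Θ((‖y − x⋆‖² − ‖z − x⋆‖²) + (Θ + 1)‖y − z‖²) + ε²`. -/
theorem pnpg_iterate_distance_recursion {E : Type*} [NormedAddCommGroup E]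
    [InnerProductSpace ℝ E] [FiniteDimensional ℝ E]
    (L R f : E → ℝ) (gradL : E → E)
    (hLconv : ConvexOn ℝ Set.univ L)
    (hLgrad : ∀ x, HasGradientAt L (gradL x) x)
    (hRconv : ConvexOn ℝ Set.univ R)
    (hf : ∀ x, f x = L x + R x)
    (C : Set E) (hCne : C.Nonempty) (hCcl : IsClosed C) (hCconv : Convex ℝ C)
    (P : E → E) (hPmem : ∀ v, P v ∈ C)
    (hPproj : ∀ v, ∀ c ∈ C, ‖v - P v‖ ≤ ‖v - c‖)
    (Θ : ℝ) (hΘ : 0 ≤ Θ) (y z : E)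
    (wbar : E) (hwbar : wbar = P (y + Θ • (y - z)))
    (xplus : E) (β ε : ℝ) (hβ : 0 < β) (hε : 0 ≤ ε)
    (hprox : ∀ v, R v ≥ R xplus +
      ⟪v - xplus, β⁻¹ • (wbar - β • gradL wbar - xplus)⟫ - ε ^ 2 / (2 * β))
    (hmaj : L xplus ≤ L wbar + ⟪xplus - wbar, gradL wbar⟫ + ‖xplus - wbar‖ ^ 2 / (2 * β))
    (xstar : E) (hxstarC : xstar ∈ C) (hmin : ∀ v, f xstar ≤ f v) :
    ‖xplus - xstar‖ ^ 2 - ‖y - xstar‖ ^ 2 ≤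
      Θ * ((‖y - xstar‖ ^ 2 - ‖z - xstar‖ ^ 2) + (Θ + 1) * ‖y - z‖ ^ 2) + ε ^ 2 :=
  pnpg_iterate_distance_recursion_general L R f gradL hLconv hLgrad hf C hCconv P hPmem hPproj Θ y z
    wbar hwbar xplus β ε hβ hprox hmaj xstar hxstarC hmin
end
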